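/- arXiv:1709.02135 — 6 statements merged into one kernel-verified Lean document; each statement's English description precedes it below -/
import Mathlib

section
/- Let a, b, c be positive real numbers and let μ : ℕ → ℝ be defined recursively by μ_1 = b and, for m ≥ 2, μ_m = a·Σ_{p=2}^{m} c^p Σ_{(k_1,…,k_p)} μ_{k_1}⋯μ_{k_p} + b·Σ_{p=1}^{m−1} c^p Σ_{(k_1,…,k_p)} μ_{k_1}⋯μ_{k_p}, where the inner sums run over all tuples of integers k_i ≥ 1 with k_1+⋯+k_p = m in the first sum and k_1+⋯+k_p = m−1 in the second sum. Then for every m ≥ 1, μ_m ≤ (4b(c + a c²))^m / (2(c + a c²)). -/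
open Finset

/-- `compSum μ p m = Σ_{k_1+⋯+k_p = m, k_i ≥ 1} μ_{k_1} ⋯ μ_{k_p}`. -/
noncomputable def compSum (μ : ℕ → ℝ) (p m : ℕ) : ℝ :=
  ∑ k ∈ (Finset.Nat.antidiagonalTuple p m).filter (fun k => ∀ i, 1 ≤ k i),
    ∏ i, μ (k i)

/-- `μ` satisfies the two-term composition-sum recursion with parameters `a`, `b`, `c`:
`μ_1 = b` and, for `m ≥ 2`,
`μ_m = a Σ_{p=2}^m c^p Σ_{k_1+⋯+k_p=m} μ_{k_1}⋯μ_{k_p}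
     + b Σ_{p=1}^{m-1} c^p Σ_{k_1+⋯+k_p=m-1} μ_{k_1}⋯μ_{k_p}`. -/
def IsMuSeq (a b c : ℝ) (μ : ℕ → ℝ) : Prop :=
  μ 1 = b ∧ ∀ m, 2 ≤ m →
    μ m = a * ∑ p ∈ Finset.Icc 2 m, c ^ p * compSum μ p m
        + b * ∑ p ∈ Finset.Icc 1 (m - 1), c ^ p * compSum μ p (m - 1)

/-!
With `g = Σ_{m ≥ 1} μ_m X^m`, the inner composition sums are the coefficients of `g^p`, so the
recursion reads `g = bX + a(W - cg) + bXW` with `W = Σ_{p ≥ 1} (cg)^p = cg / (1 - cg)`.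
Multiplying by `1 - cg` gives the Catalan equation `g = bX + (c + ac²) g²`, whence
`μ_{n+1} = Cat_n b^{n+1} (c + ac²)^n`, and the bound follows from `Cat_n ≤ 4^n`.
-/

open PowerSeries

namespace PowerSeries

theorem coeff_pow_eq_sum_antidiagonalTuple {R : Type*} [CommSemiring R] (f : R⟦X⟧) (p m : ℕ) :
    coeff m (f ^ p) = ∑ k ∈ Finset.Nat.antidiagonalTuple p m, ∏ i, coeff (k i) f := by
  induction p generalizing m with
  | zero => cases m <;> simp [Finset.Nat.antidiagonalTuple_zero_zero, coeff_one]
  | succ p ih =>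
    rw [pow_succ', coeff_mul, sum_congr rfl fun ij _ => by rw [ih, mul_sum], sum_sigma']
    refine sum_nbij' (fun x => Fin.cons x.1.1 x.2)
      (fun k => ⟨(k 0, ∑ i, Fin.tail k i), Fin.tail k⟩) ?_ ?_ ?_ ?_ ?_
    · rintro ⟨⟨i, j⟩, k⟩ hx
      simp only [mem_sigma, HasAntidiagonal.mem_antidiagonal, Nat.mem_antidiagonalTuple]
        at hx ⊢
      rw [Fin.sum_cons, hx.2, hx.1]
    · intro k hk
      simp only [Nat.mem_antidiagonalTuple] at hk
      simp only [mem_sigma, HasAntidiagonal.mem_antidiagonal, Nat.mem_antidiagonalTuple,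
        and_true, ← hk, Fin.sum_univ_succ]
      rfl
    · rintro ⟨⟨i, j⟩, k⟩ hx
      simp only [mem_sigma, Nat.mem_antidiagonalTuple] at hx
      simp [hx.2]
    · intro k _
      exact Fin.cons_self_tail k
    · intro x _
      simp [Fin.prod_univ_succ]

theorem coeff_mul_inv_one_sub {k : Type*} [Field k] {f : k⟦X⟧} (hf : constantCoeff f = 0)
    {m M : ℕ} (hm : m ≤ M) : coeff m (f * (1 - f)⁻¹) = ∑ p ∈ Icc 1 M, coeff m (f ^ p) := by
  have hunit : (1 - f) * (1 - f)⁻¹ = 1 := PowerSeries.mul_inv_cancel _ (by simp [hf])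
  have hgeom : ∀ N, (∑ p ∈ Icc 1 N, f ^ p) * (1 - f) = f - f ^ (N + 1) := by
    intro N
    induction N with
    | zero => simp
    | succ N ih =>
      rw [sum_Icc_succ_top (by omega), add_mul, ih]
      ring
  have hsplit : f * (1 - f)⁻¹ = ∑ p ∈ Icc 1 M, f ^ p + f ^ (M + 1) * (1 - f)⁻¹ := by
    linear_combination (-(1 - f)⁻¹) * hgeom M + (∑ p ∈ Icc 1 M, f ^ p) * hunit
  have htail : coeff m (f ^ (M + 1) * (1 - f)⁻¹) = 0 := by
    refine X_pow_dvd_iff.mp (Dvd.dvd.mul_right (pow_dvd_pow_of_dvd ?_ _) _) m (by omega)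
    exact X_dvd_iff.mpr hf
  rw [hsplit, map_add, htail, add_zero, map_sum]

theorem coeff_succ_eq_catalan {R : Type*} [CommRing R] {g : R⟦X⟧} {b d : R}
    (h0 : constantCoeff g = 0) (hg : g = C b * X + C d * g ^ 2) (n : ℕ) :
    coeff (n + 1) g = catalan n * b ^ (n + 1) * d ^ n := by
  induction n using Nat.strong_induction_on with
  | _ n ih =>
    rw [hg, map_add, coeff_C_mul, coeff_X, coeff_C_mul, sq, coeff_mul, Nat.sum_antidiagonal_succ]
    rcases n with _ | n
    · simp [h0]
    · rw [Nat.sum_antidiagonal_succ']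
      simp only [coeff_zero_eq_constantCoeff, h0, zero_mul, mul_zero, zero_add]
      rw [if_neg (by omega), mul_zero, zero_add, catalan_succ', Nat.cast_sum, sum_mul,
        sum_mul, mul_sum]
      refine sum_congr rfl fun ij hij => ?_
      have hsum : ij.1 + ij.2 = n := HasAntidiagonal.mem_antidiagonal.mp hij
      rw [ih ij.1 (by omega), ih ij.2 (by omega), ← hsum, Nat.cast_mul]
      ring

end PowerSeries

theorem catalan_le_four_pow (n : ℕ) : catalan n ≤ 4 ^ n :=
  (catalan_eq_centralBinom_div n ▸ Nat.div_le_self _ _).trans (Nat.centralBinom_le_four_pow n)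

noncomputable def genSeries (μ : ℕ → ℝ) : ℝ⟦X⟧ :=
  mk fun k => if k = 0 then 0 else μ k

lemma coeff_genSeries (μ : ℕ → ℝ) (k : ℕ) :
    coeff k (genSeries μ) = if k = 0 then 0 else μ k :=
  coeff_mk _ _

lemma constantCoeff_genSeries (μ : ℕ → ℝ) : constantCoeff (genSeries μ) = 0 := by
  rw [← coeff_zero_eq_constantCoeff_apply, coeff_genSeries, if_pos rfl]

-- A tuple with a zero entry contributes `coeff 0 (genSeries μ) = 0`, which accounts for the
-- restriction `k_i ≥ 1` in `compSum`.
lemma compSum_eq_coeff_pow (μ : ℕ → ℝ) (p m : ℕ) :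
    compSum μ p m = coeff m (genSeries μ ^ p) := by
  rw [coeff_pow_eq_sum_antidiagonalTuple, compSum]
  calc _ = ∑ k ∈ (Finset.Nat.antidiagonalTuple p m).filter (fun k => ∀ i, 1 ≤ k i),
        ∏ i, coeff (k i) (genSeries μ) := by
        refine sum_congr rfl fun k hk => prod_congr rfl fun i _ => ?_
        rw [coeff_genSeries, if_neg (Nat.one_le_iff_ne_zero.mp ((mem_filter.mp hk).2 i))]
    _ = _ := by
      refine sum_filter_of_ne fun k _ hk i => Nat.one_le_iff_ne_zero.mpr fun hki => hk ?_
      exact prod_eq_zero (mem_univ i) (by rw [coeff_genSeries, if_pos hki])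

noncomputable def compSeries (c : ℝ) (μ : ℕ → ℝ) : ℝ⟦X⟧ :=
  C c * genSeries μ * (1 - C c * genSeries μ)⁻¹

lemma coeff_compSeries (c : ℝ) (μ : ℕ → ℝ) (m : ℕ) :
    coeff m (compSeries c μ) = ∑ p ∈ Icc 1 m, c ^ p * compSum μ p m := by
  rw [compSeries, coeff_mul_inv_one_sub (by simp [constantCoeff_genSeries]) le_rfl]
  refine sum_congr rfl fun p _ => ?_
  rw [mul_pow, ← map_pow, coeff_C_mul, compSum_eq_coeff_pow]

lemma compSeries_mul_one_sub (c : ℝ) (μ : ℕ → ℝ) :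
    compSeries c μ * (1 - C c * genSeries μ) = C c * genSeries μ := by
  rw [compSeries, mul_assoc, mul_comm _ (1 - _), PowerSeries.mul_inv_cancel _ (by
    simp [constantCoeff_genSeries]), mul_one]

lemma genSeries_eq_of_isMuSeq {a b c : ℝ} {μ : ℕ → ℝ} (hμ : IsMuSeq a b c μ) :
    genSeries μ = C b * X + C a * (compSeries c μ - C c * genSeries μ)
      + C b * X * compSeries c μ := by
  have hcomp_one (m : ℕ) (hm : 1 ≤ m) : compSum μ 1 m = μ m := by
    rw [compSum_eq_coeff_pow, pow_one, coeff_genSeries, if_neg (by omega)]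
  ext m
  simp only [map_add, map_sub, coeff_C_mul, mul_assoc, coeff_X, coeff_genSeries]
  rcases Nat.lt_or_ge m 2 with hm | hm
  · interval_cases m <;> simp [hμ.1, hcomp_one, coeff_compSeries]
  · obtain ⟨n, rfl⟩ := Nat.exists_eq_add_of_le' hm
    have hrec : μ (n + 2) = a * ∑ p ∈ Icc 2 (n + 2), c ^ p * compSum μ p (n + 2)
        + b * ∑ p ∈ Icc 1 (n + 1), c ^ p * compSum μ p (n + 1) := hμ.2 (n + 2) (by omega)
    rw [coeff_succ_X_mul, coeff_compSeries, coeff_compSeries,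
      ← add_sum_Ioc_eq_sum_Icc (by omega : 1 ≤ n + 2), ← Icc_add_one_left_eq_Ioc,
      one_add_one_eq_two, pow_one, hcomp_one _ (by omega), if_neg (by omega), if_neg (by omega)]
    linear_combination hrec

lemma genSeries_eq_X_add_sq {a b c : ℝ} {μ : ℕ → ℝ} (hμ : IsMuSeq a b c μ) :
    genSeries μ = C b * X + C (c + a * c ^ 2) * genSeries μ ^ 2 := by
  rw [map_add, map_mul, map_pow]
  linear_combination (1 - C c * genSeries μ) * genSeries_eq_of_isMuSeq hμ
    + (C a + C b * X) * compSeries_mul_one_sub c μ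

theorem mu_le_pow (a b c : ℝ) (ha : 0 < a) (hb : 0 < b) (hc : 0 < c)
    (μ : ℕ → ℝ) (hμ : IsMuSeq a b c μ) :
    ∀ m, 1 ≤ m →
      μ m ≤ (4 * b * (c + a * c ^ 2)) ^ m / (2 * (c + a * c ^ 2)) := by
  intro m hm
  obtain ⟨n, rfl⟩ := Nat.exists_eq_add_of_le' hm
  have hd : 0 < c + a * c ^ 2 := by positivity
  have hμn : μ (n + 1) = catalan n * b ^ (n + 1) * (c + a * c ^ 2) ^ n := by
    rw [← coeff_succ_eq_catalan (constantCoeff_genSeries μ) (genSeries_eq_X_add_sq hμ),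
      coeff_genSeries, if_neg n.succ_ne_zero]
  have hcat : (catalan n : ℝ) ≤ 4 ^ n := by exact_mod_cast catalan_le_four_pow n
  calc μ (n + 1) ≤ 4 ^ n * b ^ (n + 1) * (c + a * c ^ 2) ^ n := by rw [hμn]; gcongr
    _ ≤ 2 * (4 ^ n * b ^ (n + 1) * (c + a * c ^ 2) ^ n) :=
      le_mul_of_one_le_left (by positivity) one_le_two
    _ = (4 * b * (c + a * c ^ 2)) ^ (n + 1) / (2 * (c + a * c ^ 2)) := by
      rw [eq_div_iff (by positivity), mul_pow, mul_pow]
      ring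
end

section
/- Let a, b, c be positive real numbers, let n ≥ 1 be an integer, and let μ : ℕ → ℝ be defined recursively by μ_1 = b and, for m ≥ 2, μ_m = a·Σ_{p=2}^{m} c^p Σ_{k_1+⋯+k_p=m, k_i≥1} μ_{k_1}⋯μ_{k_p} + b·Σ_{p=1}^{m−1} c^p Σ_{k_1+⋯+k_p=m−1, k_i≥1} μ_{k_1}⋯μ_{k_p}. Suppose v : ℕ → ℝ is a sequence of nonnegative reals with v_1 ≤ b and, for every m ≥ 2, v_m ≤ a·Σ_{p=2}^{m} c^p Σ_{(k_1,…,k_p)} v_{k_1}⋯v_{k_p} + b·Σ_{p=1}^{m−1} c^p Σ_{(k_1,…,k_p)} v_{k_1}⋯v_{k_p}, where now the inner sums are additionally restricted to tuples with 1 ≤ k_i ≤ n for all i (and k_1+⋯+k_p = m, respectively m−1). Then v_m ≤ μ_m for every m ≥ 1. -/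
open Finset

/-- `compSumLe n v p m = Σ_{k_1+⋯+k_p = m, 1 ≤ k_i ≤ n} v_{k_1} ⋯ v_{k_p}`. -/
noncomputable def compSumLe (n : ℕ) (v : ℕ → ℝ) (p m : ℕ) : ℝ :=
  ∑ k ∈ (Finset.Nat.antidiagonalTuple p m).filter (fun k => ∀ i, 1 ≤ k i ∧ k i ≤ n),
    ∏ i, v (k i)

-- The other `p - 1` parts of the composition contribute at least `1` each.
lemma add_le_of_mem_antidiagonalTuple {p m : ℕ} {k : Fin p → ℕ}
    (hk : k ∈ Finset.Nat.antidiagonalTuple p m) (hpos : ∀ i, 1 ≤ k i) (i : Fin p) :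
    k i + p ≤ m + 1 := by
  rw [Finset.Nat.mem_antidiagonalTuple] at hk
  have hrest : (univ.erase i).card • 1 ≤ ∑ j ∈ univ.erase i, k j :=
    card_nsmul_le_sum _ _ _ fun j _ => hpos j
  rw [card_erase_of_mem (mem_univ i), card_univ, Fintype.card_fin, smul_eq_mul, mul_one] at hrest
  have hsplit := add_sum_erase univ k (mem_univ i)
  have := hpos i
  omega

lemma compSumLe_le_compSum {n p m : ℕ} {v : ℕ → ℝ} (hv : ∀ j, 0 ≤ v j) :
    compSumLe n v p m ≤ compSum v p m :=
  sum_le_sum_of_subset_of_nonneg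
    (monotone_filter_right _ fun _ _ hk i => (hk i).1)
    fun _ _ _ => prod_nonneg fun _ _ => hv _

lemma compSum_le_compSum {p m : ℕ} {v μ : ℕ → ℝ} (hv : ∀ j, 0 ≤ v j)
    (hvμ : ∀ j, 1 ≤ j → j + p ≤ m + 1 → v j ≤ μ j) :
    compSum v p m ≤ compSum μ p m := by
  refine sum_le_sum fun k hk => prod_le_prod (fun _ _ => hv _) fun i _ => ?_
  rw [mem_filter] at hk
  exact hvμ _ (hk.2 i) (add_le_of_mem_antidiagonalTuple hk.1 hk.2 i)

lemma compSumLe_le_compSum_of_le {n p m : ℕ} {v μ : ℕ → ℝ} (hv : ∀ j, 0 ≤ v j)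
    (hvμ : ∀ j, 1 ≤ j → j + p ≤ m + 1 → v j ≤ μ j) :
    compSumLe n v p m ≤ compSum μ p m :=
  (compSumLe_le_compSum hv).trans (compSum_le_compSum hv hvμ)

theorem v_le_mu_general (a b c : ℝ) (ha : 0 < a) (hb : 0 < b) (hc : 0 < c)
    (n : ℕ)
    (μ : ℕ → ℝ) (hμ : IsMuSeq a b c μ)
    (v : ℕ → ℝ) (hv_nonneg : ∀ m, 0 ≤ v m) (hv1 : v 1 ≤ b)
    (hv : ∀ m, 2 ≤ m →
      v m ≤ a * ∑ p ∈ Finset.Icc 2 m, c ^ p * compSumLe n v p m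
          + b * ∑ p ∈ Finset.Icc 1 (m - 1), c ^ p * compSumLe n v p (m - 1)) :
    ∀ m, 1 ≤ m → v m ≤ μ m := by
  obtain ⟨hμ1, hμrec⟩ := hμ
  intro m
  induction m using Nat.strong_induction_on with
  | _ m ih =>
    intro hm
    obtain rfl | hm2 := eq_or_lt_of_le hm
    · exact hμ1 ▸ hv1
    calc v m ≤ a * ∑ p ∈ Icc 2 m, c ^ p * compSumLe n v p m
          + b * ∑ p ∈ Icc 1 (m - 1), c ^ p * compSumLe n v p (m - 1) := hv m hm2
      _ ≤ a * ∑ p ∈ Icc 2 m, c ^ p * compSum μ p m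
          + b * ∑ p ∈ Icc 1 (m - 1), c ^ p * compSum μ p (m - 1) := by
        gcongr with p hp p hp <;>
          exact compSumLe_le_compSum_of_le hv_nonneg fun j hj hjp => ih j (by grind) hj
      _ = μ m := (hμrec m hm2).symm

theorem v_le_mu (a b c : ℝ) (ha : 0 < a) (hb : 0 < b) (hc : 0 < c)
    (n : ℕ) (hn : 1 ≤ n)
    (μ : ℕ → ℝ) (hμ : IsMuSeq a b c μ)
    (v : ℕ → ℝ) (hv_nonneg : ∀ m, 0 ≤ v m) (hv1 : v 1 ≤ b)
    (hv : ∀ m, 2 ≤ m →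
      v m ≤ a * ∑ p ∈ Finset.Icc 2 m, c ^ p * compSumLe n v p m
          + b * ∑ p ∈ Finset.Icc 1 (m - 1), c ^ p * compSumLe n v p (m - 1)) :
    ∀ m, 1 ≤ m → v m ≤ μ m :=
  v_le_mu_general a b c ha hb hc n μ hμ v hv_nonneg hv1 hv
end

section
/- Let a, b, c be positive real numbers and let μ : ℕ → ℝ be defined recursively by μ_1 = b and, for m ≥ 2, μ_m = a·Σ_{p=2}^{m} c^p Σ_{k_1+⋯+k_p=m, k_i≥1} μ_{k_1}⋯μ_{k_p} + b·Σ_{p=1}^{m−1} c^p Σ_{k_1+⋯+k_p=m−1, k_i≥1} μ_{k_1}⋯μ_{k_p}. Set z₀ = 1/(4b(c + a c²)). Then for every real z with 0 ≤ z < z₀, the series Σ_{m=1}^{∞} μ_m z^m converges and its sum equals (1 − √(1 − 4b(c + a c²)·z)) / (2(c + a c²)). -/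
open Finset

/-!
For `F = Σ μ_m X^m` the recursion says `F = a Σ_{p ≥ 2} (cF)^p + bX Σ_{p ≥ 0} (cF)^p`; multiplying
by `1 - cF` turns this into `F = (c + ac²) F² + bX`. That quadratic is solved by
`F = bX · Cat(b(c + ac²)X)` with `Cat` the Catalan series, and since the recursion determines `μ`,
`μ_{m+1} = b (b(c + ac²))^m catalan m`. The real series `S = Σ catalan m · x^{m+1}` converges for
`0 ≤ x ≤ 1/4` with `S ≤ 1/2` (at `x = 1/4` its partial sums telescope via central binomial
coefficients), and the Cauchy product gives `S = x + S²`, which picks the root `(1 - √(1 - 4x)) / 2`.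
-/

open PowerSeries

section Formal

variable {R : Type*} [CommRing R]

theorem PowerSeries.coeff_pow_eq_sum_antidiagonalTuple_s2 (F : R⟦X⟧) (p m : ℕ) :
    coeff m (F ^ p) = ∑ k ∈ Finset.Nat.antidiagonalTuple p m, ∏ i, coeff (k i) F := by
  classical
  rw [← Fin.prod_const, coeff_prod]
  refine sum_nbij' (⇑) Finsupp.equivFunOnFinite.symm ?_ ?_ ?_ ?_ ?_ <;>
    intro k hk <;> simp_all [Finset.Nat.mem_antidiagonalTuple]

theorem PowerSeries.coeff_pow_eq_zero_of_lt {F : R⟦X⟧} (hF : constantCoeff F = 0) {p m : ℕ}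
    (h : m < p) : coeff m (F ^ p) = 0 := by
  obtain ⟨G, rfl⟩ := X_dvd_iff.mpr hF
  rw [mul_pow, coeff_X_pow_mul', if_neg (by omega)]

theorem mul_geom_sum_of_eq_quadratic {a b c : R} {F : R⟦X⟧}
    (hF : F = C (c + a * c ^ 2) * F ^ 2 + C b * X) (N : ℕ) :
    (C (a * c ^ 2) * F ^ 2 + C b * X) * ∑ p ∈ range N, (C c * F) ^ p
      = F - C (c ^ N) * F ^ (N + 1) := by
  have hgeom := geom_sum_mul (C c * F) N
  simp only [map_add, map_mul, map_pow] at hF ⊢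
  linear_combination (-(∑ p ∈ range N, (C c * F) ^ p)) * hF - F * hgeom

theorem coeff_eq_of_eq_quadratic {a b c : R} {F : R⟦X⟧} (hF0 : constantCoeff F = 0)
    (hF : F = C (c + a * c ^ 2) * F ^ 2 + C b * X) (n : ℕ) :
    coeff (n + 2) F = a * ∑ p ∈ Icc 2 (n + 2), c ^ p * coeff (n + 2) (F ^ p)
        + b * ∑ p ∈ Icc 1 (n + 1), c ^ p * coeff (n + 1) (F ^ p) := by
  have hcoeff := congrArg (coeff (n + 2)) (mul_geom_sum_of_eq_quadratic hF (n + 2))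
  rw [map_sub, coeff_C_mul, coeff_pow_eq_zero_of_lt hF0 (by omega), mul_zero,
    sub_zero] at hcoeff
  have hterm (p : ℕ) : (C (a * c ^ 2) * F ^ 2 + C b * X) * (C c * F) ^ p
      = C (a * c ^ (p + 2)) * F ^ (p + 2) + C (b * c ^ p) * (X * F ^ p) := by
    simp only [map_mul, map_pow]
    ring
  simp only [← hcoeff, mul_sum, hterm, map_sum, map_add, coeff_C_mul, coeff_succ_X_mul,
    sum_add_distrib]
  rw [← Ico_add_one_right_eq_Icc, ← Ico_add_one_right_eq_Icc, sum_Ico_eq_sum_range,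
    sum_Ico_eq_sum_range, sum_range_succ, sum_range_succ' _ (n + 1),
    coeff_pow_eq_zero_of_lt hF0 (by omega), pow_zero, pow_zero, coeff_one, if_neg (by omega)]
  simp only [add_comm 2, add_comm 1, Nat.add_sub_cancel, show n + 2 + 1 - 2 = n + 1 by omega,
    mul_assoc, mul_zero, add_zero]

noncomputable def scaledCatalanSeries (b q : R) : R⟦X⟧ :=
  C b * X * rescale (b * q) (map (Nat.castRingHom R) catalanSeries)

theorem scaledCatalanSeries_eq (b q : R) :
    scaledCatalanSeries b q = C q * scaledCatalanSeries b q ^ 2 + C b * X := by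
  have h := congrArg (fun F => rescale (b * q) (map (Nat.castRingHom R) F))
    catalanSeries_sq_mul_X_add_one
  simp only [map_add, map_mul, map_pow, map_X, map_one, rescale_X] at h
  unfold scaledCatalanSeries
  linear_combination (-(C b * X)) * h

theorem constantCoeff_scaledCatalanSeries (b q : R) :
    constantCoeff (scaledCatalanSeries b q) = 0 := by
  simp [scaledCatalanSeries]

theorem coeff_succ_scaledCatalanSeries (b q : R) (n : ℕ) :
    coeff (n + 1) (scaledCatalanSeries b q) = b * (b * q) ^ n * catalan n := by
  rw [scaledCatalanSeries, mul_comm (C b), mul_assoc, coeff_succ_X_mul, coeff_C_mul,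
    coeff_rescale, coeff_map]
  simp [mul_assoc]

end Formal

theorem compSum_congr {μ ν : ℕ → ℝ} {p m : ℕ}
    (h : ∀ j, 1 ≤ j → j + p ≤ m + 1 → μ j = ν j) : compSum μ p m = compSum ν p m := by
  refine sum_congr rfl fun k hk => prod_congr rfl fun i _ => ?_
  rw [mem_filter, Finset.Nat.mem_antidiagonalTuple] at hk
  obtain ⟨hsum, hpos⟩ := hk
  refine h _ (hpos i) ?_
  have hrest : (univ.erase i).card • 1 ≤ ∑ j ∈ univ.erase i, k j :=
    card_nsmul_le_sum _ _ _ fun j _ => hpos j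
  rw [card_erase_of_mem (mem_univ i), card_univ, Fintype.card_fin, smul_eq_mul, mul_one] at hrest
  have htotal : ∑ j ∈ univ.erase i, k j + k i = m := (sum_erase_add _ _ (mem_univ i)).trans hsum
  have := i.pos
  omega

theorem compSum_coeff {F : ℝ⟦X⟧} (hF0 : constantCoeff F = 0) (p m : ℕ) :
    compSum (fun n => coeff n F) p m = coeff m (F ^ p) := by
  rw [coeff_pow_eq_sum_antidiagonalTuple_s2, compSum]
  refine sum_filter_of_ne fun k _ hk i => Nat.one_le_iff_ne_zero.mpr fun hki => hk ?_
  exact prod_eq_zero (mem_univ i) (by rw [hki, coeff_zero_eq_constantCoeff, hF0])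

theorem IsMuSeq.eq_of_one_le {a b c : ℝ} {μ ν : ℕ → ℝ} (hμ : IsMuSeq a b c μ)
    (hν : IsMuSeq a b c ν) {m : ℕ} (hm : 1 ≤ m) : μ m = ν m := by
  induction m using Nat.strong_induction_on with
  | _ m ih =>
    obtain rfl | hm2 := hm.eq_or_lt
    · rw [hμ.1, hν.1]
    · rw [hμ.2 m hm2, hν.2 m hm2]
      congr 2 <;> refine sum_congr rfl fun p hp => ?_ <;> rw [mem_Icc] at hp <;>
        rw [compSum_congr fun j hj hjp => ih j (by omega) hj]

theorem isMuSeq_coeff {a b c : ℝ} {F : ℝ⟦X⟧} (hF0 : constantCoeff F = 0)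
    (hF : F = C (c + a * c ^ 2) * F ^ 2 + C b * X) : IsMuSeq a b c (fun m => coeff m F) := by
  refine ⟨?_, fun m hm => ?_⟩
  · show coeff 1 F = b
    rw [congrArg (coeff 1) hF, map_add, coeff_C_mul, coeff_pow_eq_zero_of_lt hF0 one_lt_two,
      coeff_C_mul, coeff_one_X, mul_zero, zero_add, mul_one]
  · obtain ⟨n, rfl⟩ := Nat.exists_eq_add_of_le' hm
    simp only [compSum_coeff hF0]
    exact coeff_eq_of_eq_quadratic hF0 hF n

theorem sum_range_catalan_div_four_pow (N : ℕ) :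
    ∑ m ∈ range N, (catalan m : ℝ) / 4 ^ (m + 1) = 1 / 2 - N.centralBinom / (2 * 4 ^ N) := by
  induction N with
  | zero => simp
  | succ N ih =>
    have h1 : ((N : ℝ) + 1) * (N + 1).centralBinom = 2 * (2 * N + 1) * N.centralBinom := by
      exact_mod_cast Nat.succ_mul_centralBinom_succ N
    have h2 : ((N : ℝ) + 1) * catalan N = N.centralBinom := by
      exact_mod_cast succ_mul_catalan_eq_centralBinom N
    have hrec : ((N + 1).centralBinom : ℝ) = 4 * N.centralBinom - 2 * catalan N :=
      mul_left_cancel₀ (by positivity : (N : ℝ) + 1 ≠ 0) (by linear_combination h1 + 2 * h2)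
    rw [sum_range_succ, ih, hrec]
    field_simp
    ring

theorem sum_range_catalan_mul_pow_le {x : ℝ} (hx0 : 0 ≤ x) (hx : x ≤ 1 / 4) (N : ℕ) :
    ∑ m ∈ range N, (catalan m : ℝ) * x ^ (m + 1) ≤ 1 / 2 :=
  calc ∑ m ∈ range N, (catalan m : ℝ) * x ^ (m + 1)
      ≤ ∑ m ∈ range N, (catalan m : ℝ) / 4 ^ (m + 1) := by
        gcongr with m
        rw [div_eq_mul_inv, ← inv_pow]
        gcongr
        linarith
    _ ≤ 1 / 2 := by
        rw [sum_range_catalan_div_four_pow]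
        linarith [show (0 : ℝ) ≤ N.centralBinom / (2 * 4 ^ N) by positivity]

theorem hasSum_catalan_mul_pow {x : ℝ} (hx0 : 0 ≤ x) (hx : x ≤ 1 / 4) :
    HasSum (fun m => (catalan m : ℝ) * x ^ (m + 1)) ((1 - √(1 - 4 * x)) / 2) := by
  set f : ℕ → ℝ := fun m => (catalan m : ℝ) * x ^ (m + 1) with hf_def
  have hf_nonneg (m : ℕ) : 0 ≤ f m := by positivity
  have hf : Summable f := summable_of_sum_range_le hf_nonneg (sum_range_catalan_mul_pow_le hx0 hx)
  have hS : ∑' m, f m ≤ 1 / 2 :=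
    Real.tsum_le_of_sum_range_le hf_nonneg (sum_range_catalan_mul_pow_le hx0 hx)
  have hconv (n : ℕ) : ∑ ij ∈ antidiagonal n, f ij.1 * f ij.2 = f (n + 1) := by
    simp only [hf_def, catalan_succ', Nat.cast_sum, Nat.cast_mul, sum_mul]
    refine sum_congr rfl fun ij hij => ?_
    rw [← mem_antidiagonal.mp hij]
    ring
  have hquad : ∑' m, f m = x + (∑' m, f m) ^ 2 := by
    rw [sq, tsum_mul_tsum_eq_tsum_sum_antidiagonal_of_summable_norm hf.norm hf.norm]
    simp only [hconv]
    rw [hf.tsum_eq_zero_add]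
    simp [hf_def]
  have hsqrt : √(1 - 4 * x) = 1 - 2 * ∑' m, f m := by
    rw [show 1 - 4 * x = (1 - 2 * ∑' m, f m) ^ 2 by linear_combination 4 * hquad,
      Real.sqrt_sq (by linarith)]
  rw [hsqrt, show (1 - (1 - 2 * ∑' m, f m)) / 2 = ∑' m, f m by ring]
  exact hf.hasSum

/-- For `0 ≤ z < z₀ = 1/(4b(c + ac²))`, the generating series `Σ_{m≥1} μ_m z^m` converges
with sum `(1 − √(1 − 4b(c + ac²) z)) / (2(c + ac²))`. -/
theorem mu_generating_function (a b c : ℝ) (ha : 0 < a) (hb : 0 < b) (hc : 0 < c)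
    (μ : ℕ → ℝ) (hμ : IsMuSeq a b c μ)
    (z : ℝ) (hz0 : 0 ≤ z) (hz : z < 1 / (4 * b * (c + a * c ^ 2))) :
    HasSum (fun m : ℕ => μ (m + 1) * z ^ (m + 1))
      ((1 - Real.sqrt (1 - 4 * b * (c + a * c ^ 2) * z)) / (2 * (c + a * c ^ 2))) := by
  set q := c + a * c ^ 2
  have hq : 0 < q := by positivity
  have hμ_eq (m : ℕ) : μ (m + 1) = b * (b * q) ^ m * catalan m := by
    rw [hμ.eq_of_one_le (isMuSeq_coeff (constantCoeff_scaledCatalanSeries b q)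
      (scaledCatalanSeries_eq b q)) (Nat.le_add_left 1 m), coeff_succ_scaledCatalanSeries]
  clear_value q
  have hx : b * q * z ≤ 1 / 4 := by
    rw [lt_div_iff₀ (by positivity)] at hz
    linarith
  have hterms : (fun m => μ (m + 1) * z ^ (m + 1))
      = fun m => (catalan m : ℝ) * (b * q * z) ^ (m + 1) / q := by
    funext m
    rw [hμ_eq, eq_div_iff hq.ne']
    ring
  have hvalue :
      (1 - √(1 - 4 * b * q * z)) / (2 * q) = (1 - √(1 - 4 * (b * q * z))) / 2 / q := by
    rw [div_div, mul_assoc 4, mul_assoc 4]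
  rw [hterms, hvalue]
  exact (hasSum_catalan_mul_pow (by positivity) hx).div_const q
end

section
/- Let a, b, c be positive real numbers and let z be a real number with 0 ≤ z < 1/(4b(c + a c²)). Define w = (1 − √(1 − 4b(c + a c²)·z)) / (2(c + a c²)). Then c·w < 1, w ≤ 1/(2(c + a c²)), and w satisfies the functional equation w = a·(1/(1 − c w) − 1 − c w) + b z·(1/(1 − c w) − 1) + b z. -/
/-!
Multiplying the functional equation by `1 - c w` turns it into the quadratic
`(c + a c²) w² - w + b z = 0`, of which `w` is the smaller root; this root is real because
`4 b (c + a c²) z < 1`. Since the square root is nonnegative, `w ≤ 1 / (2 (c + a c²))`, hence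
`c w ≤ 1 / (2 (1 + a c)) < 1`.
-/

open Real

theorem quadratic_eq_zero_of_eq_one_sub_sqrt_div {D q : ℝ} (hD : D ≠ 0) (hdisc : 4 * D * q ≤ 1) :
    D * ((1 - √(1 - 4 * D * q)) / (2 * D)) ^ 2 - (1 - √(1 - 4 * D * q)) / (2 * D) + q = 0 := by
  have hsq := sq_sqrt (sub_nonneg.mpr hdisc)
  set s := √(1 - 4 * D * q)
  field_simp
  linear_combination hsq

theorem one_sub_sqrt_div_le {D : ℝ} (hD : 0 < D) (x : ℝ) :
    (1 - √x) / (2 * D) ≤ 1 / (2 * D) :=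
  div_le_div_of_nonneg_right (sub_le_self _ (sqrt_nonneg x)) (by positivity)

theorem mul_lt_one_of_le_one_div {a c w : ℝ} (ha : 0 ≤ a) (hc : 0 < c)
    (hw : w ≤ 1 / (2 * (c + a * c ^ 2))) : c * w < 1 := by
  have hD : 0 < c + a * c ^ 2 := by positivity
  rw [le_div_iff₀ (by positivity)] at hw
  nlinarith [mul_nonneg ha (sq_nonneg c)]

theorem eq_of_quadratic_eq_zero {a c q w : ℝ} (hcw : c * w ≠ 1)
    (h : (c + a * c ^ 2) * w ^ 2 - w + q = 0) :
    w = a * (1 / (1 - c * w) - 1 - c * w) + q * (1 / (1 - c * w) - 1) + q := by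
  have hden : 1 - w * c ≠ 0 := by rw [mul_comm]; exact sub_ne_zero.mpr hcw.symm
  field_simp
  linear_combination -h

theorem generating_function_properties_general (a b c : ℝ) (ha : 0 < a) (hb : 0 < b) (hc : 0 < c)
    (z : ℝ) (hz : z < 1 / (4 * b * (c + a * c ^ 2))) :
    c * ((1 - Real.sqrt (1 - 4 * b * (c + a * c ^ 2) * z)) / (2 * (c + a * c ^ 2))) < 1 ∧
    (1 - Real.sqrt (1 - 4 * b * (c + a * c ^ 2) * z)) / (2 * (c + a * c ^ 2))
      ≤ 1 / (2 * (c + a * c ^ 2)) ∧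
    (1 - Real.sqrt (1 - 4 * b * (c + a * c ^ 2) * z)) / (2 * (c + a * c ^ 2)) =
      a * (1 / (1 - c * ((1 - Real.sqrt (1 - 4 * b * (c + a * c ^ 2) * z)) /
              (2 * (c + a * c ^ 2)))) - 1
          - c * ((1 - Real.sqrt (1 - 4 * b * (c + a * c ^ 2) * z)) / (2 * (c + a * c ^ 2))))
      + b * z * (1 / (1 - c * ((1 - Real.sqrt (1 - 4 * b * (c + a * c ^ 2) * z)) /
              (2 * (c + a * c ^ 2)))) - 1)
      + b * z := by
  have hD : 0 < c + a * c ^ 2 := by positivity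
  have hdisc : 4 * (c + a * c ^ 2) * (b * z) ≤ 1 := by
    rw [lt_div_iff₀ (by positivity)] at hz
    linarith
  rw [show 4 * b * (c + a * c ^ 2) * z = 4 * (c + a * c ^ 2) * (b * z) by ring]
  have hle := one_sub_sqrt_div_le hD (1 - 4 * (c + a * c ^ 2) * (b * z))
  have hcw := mul_lt_one_of_le_one_div ha.le hc hle
  exact ⟨hcw, hle, eq_of_quadratic_eq_zero hcw.ne
    (quadratic_eq_zero_of_eq_one_sub_sqrt_div hD.ne' hdisc)⟩

/-- Properties of `w = (1 − √(1 − 4b(c + ac²) z)) / (2(c + ac²))` for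
`0 ≤ z < 1/(4b(c + ac²))`: one has `c w < 1`, `w ≤ 1/(2(c + ac²))`, and `w` satisfies the
functional equation `w = a (1/(1 − c w) − 1 − c w) + b z (1/(1 − c w) − 1) + b z`. -/
theorem generating_function_properties (a b c : ℝ) (ha : 0 < a) (hb : 0 < b) (hc : 0 < c)
    (z : ℝ) (hz0 : 0 ≤ z) (hz : z < 1 / (4 * b * (c + a * c ^ 2))) :
    c * ((1 - Real.sqrt (1 - 4 * b * (c + a * c ^ 2) * z)) / (2 * (c + a * c ^ 2))) < 1 ∧
    (1 - Real.sqrt (1 - 4 * b * (c + a * c ^ 2) * z)) / (2 * (c + a * c ^ 2))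
      ≤ 1 / (2 * (c + a * c ^ 2)) ∧
    (1 - Real.sqrt (1 - 4 * b * (c + a * c ^ 2) * z)) / (2 * (c + a * c ^ 2)) =
      a * (1 / (1 - c * ((1 - Real.sqrt (1 - 4 * b * (c + a * c ^ 2) * z)) /
              (2 * (c + a * c ^ 2)))) - 1
          - c * ((1 - Real.sqrt (1 - 4 * b * (c + a * c ^ 2) * z)) / (2 * (c + a * c ^ 2))))
      + b * z * (1 / (1 - c * ((1 - Real.sqrt (1 - 4 * b * (c + a * c ^ 2) * z)) /
              (2 * (c + a * c ^ 2)))) - 1)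
      + b * z :=
  generating_function_properties_general a b c ha hb hc z hz
end

section
/- Let n be a nonempty finite type, let H, Q : Matrix n n ℂ with H Hermitian (Hᴴ = H), let ψ ∈ EuclideanSpace ℂ n be a unit vector, and let t ≥ 0 be real. Set Q(t) = exp(i t H) · Q · exp(−i t H) (matrix exponential). Then |⟪ψ, (Q(t) − Q) ψ⟫| ≤ t · ‖H·Q − Q·H‖, where ‖·‖ denotes the operator norm induced by the Euclidean norm on ℂⁿ. -/
/-!
The derivative of `s ↦ e^{isA} B e^{-isA}` is `e^{isA} (i[A, B]) e^{-isA}`. For self-adjoint `A`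
in a C⋆-algebra the exponentials are unitary, and multiplication by a unitary is isometric, so
this derivative has norm `‖[A, B]‖` and the mean value inequality gives
`‖e^{itA} B e^{-itA} - B‖ ≤ t ‖[A, B]‖`. Matrices act as operators on `EuclideanSpace ℂ n` through
a star-algebra isomorphism that commutes with `exp`, and `|⟪ψ, Tψ⟫| ≤ ‖T‖` for a unit vector `ψ`.
-/

open Matrix

/-- The operator norm of a complex matrix induced by the Euclidean norm on `ℂⁿ`. -/
noncomputable def matOpNorm {n : Type*} [Fintype n] [DecidableEq n] (A : Matrix n n ℂ) : ℝ :=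
  ‖Matrix.toEuclideanCLM (𝕜 := ℂ) A‖

open NormedSpace

noncomputable def heisenbergEvolution {𝔸 : Type*} [Ring 𝔸] [Algebra ℂ 𝔸] [TopologicalSpace 𝔸]
    [IsTopologicalRing 𝔸] (A : 𝔸) (t : ℝ) (B : 𝔸) : 𝔸 :=
  exp ((Complex.I * t) • A) * B * exp (-(Complex.I * t) • A)

section Conjugation

variable {𝔸 : Type*} [NormedRing 𝔸] [CompleteSpace 𝔸]

theorem hasDerivAt_exp_smul_mul_mul_exp_neg_smul {𝕂 : Type*} [RCLike 𝕂] [NormedAlgebra 𝕂 𝔸]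
    (M B : 𝔸) (s : 𝕂) :
    HasDerivAt (fun u : 𝕂 => exp (u • M) * B * exp (-(u • M)))
      (exp (s • M) * (M * B - B * M) * exp (-(s • M))) s := by
  have hleft := (hasDerivAt_exp_smul_const M s).mul_const B
  have hright := hasDerivAt_exp_smul_const' (-M) s
  simp only [smul_neg] at hright
  refine (hleft.mul hright).congr_deriv ?_
  noncomm_ring

theorem norm_exp_smul_mul_mul_exp_neg_smul_of_mem_skewAdjoint [NormedAlgebra ℝ 𝔸] [StarRing 𝔸]
    [CStarRing 𝔸] [StarModule ℝ 𝔸] {M : 𝔸} (hM : M ∈ skewAdjoint 𝔸) (s : ℝ) (C : 𝔸) :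
    ‖exp (s • M) * C * exp (-(s • M))‖ = ‖C‖ := by
  -- `exp_mem_unitary_of_mem_skewAdjoint` asks for a normed `ℚ`-algebra structure.
  let _ := NormedAlgebra.restrictScalars ℚ ℝ 𝔸
  have hsM : s • M ∈ skewAdjoint 𝔸 := skewAdjoint.smul_mem s hM
  rw [CStarRing.norm_mul_mem_unitary _ (exp_mem_unitary_of_mem_skewAdjoint (neg_mem hsM)),
    CStarRing.norm_mem_unitary_mul _ (exp_mem_unitary_of_mem_skewAdjoint hsM)]

theorem IsSelfAdjoint.norm_heisenbergEvolution_sub_le [NormedAlgebra ℂ 𝔸] [StarRing 𝔸]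
    [CStarRing 𝔸] [StarModule ℂ 𝔸] {A : 𝔸} (hA : IsSelfAdjoint A) (B : 𝔸) {t : ℝ}
    (ht : 0 ≤ t) : ‖heisenbergEvolution A t B - B‖ ≤ t * ‖A * B - B * A‖ := by
  have hIA : Complex.I • A ∈ skewAdjoint 𝔸 := hA.smul_mem_skewAdjoint Complex.conj_I
  have hsmul : (Complex.I * t) • A = t • Complex.I • A := by
    rw [mul_comm, mul_smul, Complex.coe_smul]
  have hcomm : Complex.I • A * B - B * Complex.I • A = Complex.I • (A * B - B * A) := by
    rw [smul_mul_assoc, mul_smul_comm, smul_sub]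
  have hmvt := norm_image_sub_le_of_norm_deriv_le_segment'
    (fun s _ => (hasDerivAt_exp_smul_mul_mul_exp_neg_smul (Complex.I • A) B s).hasDerivWithinAt)
    (fun s _ => (norm_exp_smul_mul_mul_exp_neg_smul_of_mem_skewAdjoint hIA s _).le) t
    (Set.right_mem_Icc.2 ht)
  rw [hcomm, norm_smul, Complex.norm_I, one_mul] at hmvt
  simpa [heisenbergEvolution, hsmul, mul_comm] using hmvt

end Conjugation

theorem Matrix.toEuclideanCLM_exp {n : Type*} [Fintype n] [DecidableEq n] (A : Matrix n n ℂ) :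
    toEuclideanCLM (𝕜 := ℂ) (exp A) = exp (toEuclideanCLM (𝕜 := ℂ) A) := by
  let e := (toEuclideanCLM (n := n) (𝕜 := ℂ)).toAlgEquiv.toLinearEquiv.toContinuousLinearEquiv
  rw [exp_eq_tsum_rat, exp_eq_tsum_rat]
  refine e.map_tsum.trans (tsum_congr fun k => ?_)
  exact (map_rat_smul e _ _).trans (congrArg _ (map_pow (toEuclideanCLM (n := n) (𝕜 := ℂ)) A k))

theorem ContinuousLinearMap.norm_inner_apply_self_le {𝕜 E : Type*} [RCLike 𝕜]
    [NormedAddCommGroup E] [InnerProductSpace 𝕜 E] (T : E →L[𝕜] E) (x : E) :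
    ‖inner 𝕜 x (T x)‖ ≤ ‖T‖ * ‖x‖ ^ 2 :=
  calc ‖inner 𝕜 x (T x)‖ ≤ ‖x‖ * ‖T x‖ := norm_inner_le_norm _ _
    _ ≤ ‖x‖ * (‖T‖ * ‖x‖) := by gcongr; exact T.le_opNorm x
    _ = ‖T‖ * ‖x‖ ^ 2 := by ring

theorem heisenberg_evolution_bound_general {n : Type*} [Fintype n] [DecidableEq n]
    (H Q : Matrix n n ℂ) (hH : Hᴴ = H)
    (ψ : EuclideanSpace ℂ n) (hψ : ‖ψ‖ = 1) (t : ℝ) (ht : 0 ≤ t) :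
    ‖(inner (𝕜 := ℂ) ψ
        (Matrix.toEuclideanCLM (𝕜 := ℂ)
          (NormedSpace.exp ((Complex.I * (t : ℂ)) • H) * Q *
              NormedSpace.exp (-(Complex.I * (t : ℂ)) • H) - Q) ψ) : ℂ)‖
      ≤ t * matOpNorm (H * Q - Q * H) := by
  set π := toEuclideanCLM (n := n) (𝕜 := ℂ)
  have hA : IsSelfAdjoint (π H) := IsSelfAdjoint.map (show IsSelfAdjoint H from hH) π
  have hevol : π (exp ((Complex.I * t) • H) * Q * exp (-(Complex.I * t) • H) - Q) =
      heisenbergEvolution (π H) t (π Q) - π Q := by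
    simp only [π, heisenbergEvolution, map_sub, map_mul, map_smul, toEuclideanCLM_exp]
  have hcomm : matOpNorm (H * Q - Q * H) = ‖π H * π Q - π Q * π H‖ := by
    simp only [matOpNorm, π, map_sub, map_mul]
  calc _ ≤ ‖π (exp ((Complex.I * t) • H) * Q * exp (-(Complex.I * t) • H) - Q)‖ :=
        (ContinuousLinearMap.norm_inner_apply_self_le _ ψ).trans_eq (by rw [hψ, one_pow, mul_one])
    _ ≤ t * matOpNorm (H * Q - Q * H) := by
        rw [hevol, hcomm]
        exact hA.norm_heisenbergEvolution_sub_le _ ht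

/-- For a Hermitian `H`, a unit vector `ψ`, and `t ≥ 0`, the Heisenberg-evolved observable
`Q(t) = e^{itH} Q e^{−itH}` satisfies `|⟪ψ, (Q(t) − Q)ψ⟫| ≤ t ‖[H, Q]‖`. -/
theorem heisenberg_evolution_bound {n : Type*} [Fintype n] [DecidableEq n] [Nonempty n]
    (H Q : Matrix n n ℂ) (hH : Hᴴ = H)
    (ψ : EuclideanSpace ℂ n) (hψ : ‖ψ‖ = 1) (t : ℝ) (ht : 0 ≤ t) :
    ‖(inner (𝕜 := ℂ) ψ
        (Matrix.toEuclideanCLM (𝕜 := ℂ)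
          (NormedSpace.exp ((Complex.I * (t : ℂ)) • H) * Q *
              NormedSpace.exp (-(Complex.I * (t : ℂ)) • H) - Q) ψ) : ℂ)‖
      ≤ t * matOpNorm (H * Q - Q * H) :=
  heisenberg_evolution_bound_general H Q hH ψ hψ t ht
end

section
/- Let L ≥ 2 and consider the chain of L qubits with Hilbert space ℂ^(Fin L → Fin 2), with single-site operators Z_j, P_j, M_j at site j (acting as Z = !![1,0;0,−1], P = !![0,1;0,0], M = !![0,0;1,0] on site j and as identity elsewhere), and periodic site indexing j+1 taken mod L. Let t₁, t₂, u₀, w₀ ∈ ℂ and Γ ∈ ℂ, and define H₀ = Γ·Σ_j Z_j, T₊₂ = t₂·Σ_j P_j P_{j+1}, T₋₂ = t₂·Σ_j M_j M_{j+1}, T₊₁ = t₁·Σ_j (P_j Z_{j+1} + Z_j P_{j+1}), T₋₁ = t₁·Σ_j (M_j Z_{j+1} + Z_j M_{j+1}), and T₀ = u₀·Σ_j Z_j Z_{j+1} + w₀·Σ_j (P_j M_{j+1} + M_j P_{j+1}). Then for every ℓ ∈ {−2, −1, 0, 1, 2}, [H₀, T_ℓ] = 2 Γ ℓ · T_ℓ.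 -/
/-! The commutator with `H₀ = Γ Σ_k Z_k` is `Γ` times the derivation `ad (Σ_k Z_k)`. Operators on
different sites commute, so `⁅Σ_k Z_k, A_j⁆ = ⁅Z, A⁆_j`; as `⁅Z, P⁆ = 2P`, `⁅Z, M⁆ = -2M` and
`⁅Z, Z⁆ = 0`, the site operators `P_j`, `M_j`, `Z_j` are eigenvectors of this derivation with
eigenvalues `2`, `-2`, `0`. By the Leibniz rule eigenvalues add under products, so every bond term
of `T_ℓ`, and hence `T_ℓ` itself, lies in the eigenspace of `2ℓ`. -/

open Finset

/-- The operator acting as the 2×2 matrix `A` on site `j` of a chain of `L` qubits and as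
the identity on all other sites. -/
noncomputable def siteOp (L : ℕ) (A : Matrix (Fin 2) (Fin 2) ℂ) (j : Fin L) :
    Matrix (Fin L → Fin 2) (Fin L → Fin 2) ℂ :=
  fun s t => A (s j) (t j) *
    ∏ i ∈ Finset.univ.filter (fun i => i ≠ j), (if s i = t i then (1 : ℂ) else 0)

noncomputable def Zmat : Matrix (Fin 2) (Fin 2) ℂ := !![1, 0; 0, -1]
noncomputable def Pmat : Matrix (Fin 2) (Fin 2) ℂ := !![0, 1; 0, 0]
noncomputable def Mmat : Matrix (Fin 2) (Fin 2) ℂ := !![0, 0; 1, 0]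

/-- The generalized ladder operators `T_ℓ`, `ℓ = −2, …, 2`, built from `P`, `M`, `Z`, with
periodic site indexing (`j + 1` taken mod `L`). -/
noncomputable def Tladder (L : ℕ) [NeZero L] (t₁ t₂ u₀ w₀ : ℂ) (ℓ : ℤ) :
    Matrix (Fin L → Fin 2) (Fin L → Fin 2) ℂ :=
  if ℓ = 2 then t₂ • ∑ j, siteOp L Pmat j * siteOp L Pmat (j + 1)
  else if ℓ = -2 then t₂ • ∑ j, siteOp L Mmat j * siteOp L Mmat (j + 1)
  else if ℓ = 1 then
    t₁ • ∑ j, (siteOp L Pmat j * siteOp L Zmat (j + 1) + siteOp L Zmat j * siteOp L Pmat (j + 1))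
  else if ℓ = -1 then
    t₁ • ∑ j, (siteOp L Mmat j * siteOp L Zmat (j + 1) + siteOp L Zmat j * siteOp L Mmat (j + 1))
  else if ℓ = 0 then
    u₀ • ∑ j, siteOp L Zmat j * siteOp L Zmat (j + 1) +
    w₀ • ∑ j, (siteOp L Pmat j * siteOp L Mmat (j + 1) + siteOp L Mmat j * siteOp L Pmat (j + 1))
  else 0

attribute [local instance] LieRing.ofAssociativeRing

open Matrix Module.End LieAlgebra

section EigenoperatorsOfAd

variable {R A : Type*} [CommRing R] [Ring A] [Algebra R A]

theorem mul_mem_eigenspace_ad {h x y : A} {a b : R} (hx : x ∈ eigenspace (ad R A h) a)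
    (hy : y ∈ eigenspace (ad R A h) b) : x * y ∈ eigenspace (ad R A h) (a + b) := by
  rw [mem_eigenspace_iff, ad_apply] at hx hy ⊢
  have leibniz : ⁅h, x * y⁆ = ⁅h, x⁆ * y + x * ⁅h, y⁆ := by
    simp only [Ring.lie_def]; noncomm_ring
  rw [leibniz, hx, hy, smul_mul_assoc, mul_smul_comm, add_smul]

end EigenoperatorsOfAd

-- Site operators are compared through this action on vectors, where products of them reduce to
-- identities of `Function.update`.
theorem siteOp_mulVec_apply (L : ℕ) (A : Matrix (Fin 2) (Fin 2) ℂ) (j : Fin L)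
    (v : (Fin L → Fin 2) → ℂ) (s : Fin L → Fin 2) :
    (siteOp L A j *ᵥ v) s = ∑ k, A (s j) k * v (Function.update s j k) := by
  have fiber : univ.filter (fun t : Fin L → Fin 2 => ∀ i ∈ univ.filter (· ≠ j), s i = t i) =
      univ.image (Function.update s j) := by
    ext t
    simp only [mem_filter, mem_univ, true_and, mem_image, ne_eq]
    refine ⟨fun h => ⟨t j, funext fun i => ?_⟩, ?_⟩
    · by_cases hi : i = j
      · subst hi; simp
      · rw [Function.update_of_ne hi, h i hi]
    · rintro ⟨k, rfl⟩ i hi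
      rw [Function.update_of_ne hi]
  simp only [mulVec, dotProduct, siteOp, prod_boole, mul_ite, mul_one, mul_zero, ite_mul,
    zero_mul, ← sum_filter, fiber]
  rw [sum_image fun a _ b _ hab => by simpa using congrFun hab j]
  simp

theorem siteOp_mul_siteOp (L : ℕ) (A B : Matrix (Fin 2) (Fin 2) ℂ) (j : Fin L) :
    siteOp L A j * siteOp L B j = siteOp L (A * B) j := by
  refine mulVec_injective (funext fun v => funext fun s => ?_)
  simp only [← mulVec_mulVec, siteOp_mulVec_apply, Function.update_self,
    Function.update_idem, Matrix.mul_apply, mul_sum, sum_mul, mul_assoc]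
  exact sum_comm

theorem siteOp_commute_of_ne (L : ℕ) (A B : Matrix (Fin 2) (Fin 2) ℂ) {i j : Fin L} (hij : i ≠ j) :
    Commute (siteOp L A i) (siteOp L B j) := by
  refine mulVec_injective (funext fun v => funext fun s => ?_)
  simp only [← mulVec_mulVec, siteOp_mulVec_apply, Function.update_of_ne hij,
    Function.update_of_ne hij.symm, mul_sum]
  rw [sum_comm]
  simp only [Function.update_comm hij, mul_left_comm]

theorem siteOp_sub (L : ℕ) (A B : Matrix (Fin 2) (Fin 2) ℂ) (j : Fin L) :
    siteOp L (A - B) j = siteOp L A j - siteOp L B j := by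
  ext s t
  simp only [siteOp, Matrix.sub_apply, sub_mul]

theorem siteOp_smul (L : ℕ) (c : ℂ) (A : Matrix (Fin 2) (Fin 2) ℂ) (j : Fin L) :
    siteOp L (c • A) j = c • siteOp L A j := by
  ext s t
  simp only [siteOp, Matrix.smul_apply, smul_eq_mul, mul_assoc]

theorem lie_siteOp_siteOp (L : ℕ) (A B : Matrix (Fin 2) (Fin 2) ℂ) (j : Fin L) :
    ⁅siteOp L A j, siteOp L B j⁆ = siteOp L ⁅A, B⁆ j := by
  simp only [Ring.lie_def, siteOp_mul_siteOp, siteOp_sub]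

theorem lie_sum_siteOp (L : ℕ) (A B : Matrix (Fin 2) (Fin 2) ℂ) (j : Fin L) :
    ⁅∑ k, siteOp L A k, siteOp L B j⁆ = siteOp L ⁅A, B⁆ j := by
  rw [sum_lie, sum_eq_single j (fun k _ hkj => commute_iff_lie_eq.mp (siteOp_commute_of_ne L A B hkj))
    (by simp), lie_siteOp_siteOp]

theorem siteOp_mem_eigenspace_ad (L : ℕ) {A B : Matrix (Fin 2) (Fin 2) ℂ} {c : ℂ}
    (h : ⁅A, B⁆ = c • B) (j : Fin L) :
    siteOp L B j ∈ eigenspace (ad ℂ _ (∑ k, siteOp L A k)) c := by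
  rw [mem_eigenspace_iff, ad_apply, lie_sum_siteOp, h, siteOp_smul]

theorem lie_Zmat_Pmat : ⁅Zmat, Pmat⁆ = (2 : ℂ) • Pmat := by
  ext i k
  fin_cases i <;> fin_cases k <;> norm_num [Ring.lie_def, Zmat, Pmat]

theorem lie_Zmat_Mmat : ⁅Zmat, Mmat⁆ = (-2 : ℂ) • Mmat := by
  ext i k
  fin_cases i <;> fin_cases k <;> norm_num [Ring.lie_def, Zmat, Mmat]

theorem lie_Zmat_Zmat : ⁅Zmat, Zmat⁆ = (0 : ℂ) • Zmat := by
  rw [lie_self, zero_smul]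

theorem siteOp_mul_siteOp_mem_eigenspace_ad (L : ℕ) {A B C : Matrix (Fin 2) (Fin 2) ℂ}
    {b c d : ℂ} (hB : ⁅A, B⁆ = b • B) (hC : ⁅A, C⁆ = c • C) (hd : b + c = d) (i j : Fin L) :
    siteOp L B i * siteOp L C j ∈ eigenspace (ad ℂ _ (∑ k, siteOp L A k)) d :=
  hd ▸ mul_mem_eigenspace_ad (siteOp_mem_eigenspace_ad L hB i) (siteOp_mem_eigenspace_ad L hC j)

theorem Tladder_mem_eigenspace_ad (L : ℕ) [NeZero L] (t₁ t₂ u₀ w₀ : ℂ) (ℓ : ℤ) :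
    Tladder L t₁ t₂ u₀ w₀ ℓ ∈ eigenspace (ad ℂ _ (∑ j, siteOp L Zmat j)) (2 * ℓ) := by
  have bond {B C : Matrix (Fin 2) (Fin 2) ℂ} {b c : ℂ} (hB : ⁅Zmat, B⁆ = b • B)
      (hC : ⁅Zmat, C⁆ = c • C) (hd : b + c = 2 * ℓ) (j : Fin L) :=
    siteOp_mul_siteOp_mem_eigenspace_ad L hB hC hd j (j + 1)
  unfold Tladder
  split_ifs with h₂ hm₂ h₁ hm₁ h₀
  · refine Submodule.smul_mem _ _ (Submodule.sum_mem _ fun j _ =>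
      bond lie_Zmat_Pmat lie_Zmat_Pmat ?_ j)
    norm_num [h₂]
  · refine Submodule.smul_mem _ _ (Submodule.sum_mem _ fun j _ =>
      bond lie_Zmat_Mmat lie_Zmat_Mmat ?_ j)
    norm_num [hm₂]
  · refine Submodule.smul_mem _ _ (Submodule.sum_mem _ fun j _ => Submodule.add_mem _
      (bond lie_Zmat_Pmat lie_Zmat_Zmat ?_ j) (bond lie_Zmat_Zmat lie_Zmat_Pmat ?_ j)) <;>
    norm_num [h₁]
  · refine Submodule.smul_mem _ _ (Submodule.sum_mem _ fun j _ => Submodule.add_mem _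
      (bond lie_Zmat_Mmat lie_Zmat_Zmat ?_ j) (bond lie_Zmat_Zmat lie_Zmat_Mmat ?_ j)) <;>
    norm_num [hm₁]
  · refine Submodule.add_mem _
      (Submodule.smul_mem _ _ (Submodule.sum_mem _ fun j _ =>
        bond lie_Zmat_Zmat lie_Zmat_Zmat ?_ j))
      (Submodule.smul_mem _ _ (Submodule.sum_mem _ fun j _ => Submodule.add_mem _
        (bond lie_Zmat_Pmat lie_Zmat_Mmat ?_ j) (bond lie_Zmat_Mmat lie_Zmat_Pmat ?_ j))) <;>
    norm_num [h₀]
  · exact Submodule.zero_mem _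

theorem H0_commutator_Tladder_general (L : ℕ) [NeZero L]
    (t₁ t₂ u₀ w₀ Γ : ℂ) (ℓ : ℤ) :
    (Γ • ∑ j, siteOp L Zmat j) * Tladder L t₁ t₂ u₀ w₀ ℓ -
        Tladder L t₁ t₂ u₀ w₀ ℓ * (Γ • ∑ j, siteOp L Zmat j) =
      (2 * Γ * (ℓ : ℂ)) • Tladder L t₁ t₂ u₀ w₀ ℓ := by
  have hT := mem_eigenspace_iff.mp (Tladder_mem_eigenspace_ad L t₁ t₂ u₀ w₀ ℓ)
  rw [ad_apply] at hT
  rw [← Ring.lie_def, smul_lie, hT, smul_smul, mul_assoc, mul_left_comm]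

/-- For `H₀ = Γ Σ_j Z_j` on a periodic chain of `L ≥ 2` qubits, each `T_ℓ` is a generalized
ladder operator: `[H₀, T_ℓ] = 2 Γ ℓ T_ℓ` for `ℓ ∈ {−2, −1, 0, 1, 2}`. -/
theorem H0_commutator_Tladder (L : ℕ) [NeZero L] (hL : 2 ≤ L)
    (t₁ t₂ u₀ w₀ Γ : ℂ) (ℓ : ℤ) (hℓ₁ : -2 ≤ ℓ) (hℓ₂ : ℓ ≤ 2) :
    (Γ • ∑ j, siteOp L Zmat j) * Tladder L t₁ t₂ u₀ w₀ ℓ -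
        Tladder L t₁ t₂ u₀ w₀ ℓ * (Γ • ∑ j, siteOp L Zmat j) =
      (2 * Γ * (ℓ : ℂ)) • Tladder L t₁ t₂ u₀ w₀ ℓ :=
  H0_commutator_Tladder_general L t₁ t₂ u₀ w₀ Γ ℓ
end
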